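/- Let K ≥ 2, let w₁,…,w_n be nonempty strings over an alphabet Σ, and let α, γ₁,…,γ_{n−1} be pairwise distinct letters not in Σ. Let w′ = w₁ α γ₁^{3K−2} α w₂ α γ₂^{3K−2} α ⋯ α γ_{n−1}^{3K−2} α w_n. Then w′ has a factor-free K-partition if and only if the multiset {w₁,…,w_n} has a factor-free K-partition. -/

import Mathlib

/-- `P` is a `K`-partition of the string `w`: a sequence of nonempty strings of
length at most `K` whose concatenation is `w`. -/
def IsPartition {α : Type*} (K : ℕ) (w : List α) (P : List (List α)) : Prop :=
  P.flatten = w ∧ ∀ p ∈ P, p ≠ [] ∧ p.length ≤ K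

/-- A `K`-partition of a finite multiset (list) of strings: a choice of a
`K`-partition of each string. -/
def IsMultiPartition {α : Type*} (K : ℕ) (ws : List (List α))
    (Ps : List (List (List α))) : Prop :=
  List.Forall₂ (IsPartition K) ws Ps

/-- A partition is factor-free if no selected string at one occurrence is a
factor (contiguous substring) of a selected string at another occurrence. -/
def FactorFree {α : Type*} (P : List (List α)) : Prop :=
  P.Pairwise fun a b => ¬ a <:+: b ∧ ¬ b <:+: a

/-- `glue d k [w₁, …, w_ℓ] = w₁ ++ d k ++ w₂ ++ d (k+1) ++ ⋯ ++ d (k+ℓ-2) ++ w_ℓ`. -/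
def glue {α : Type*} (d : ℕ → List α) : ℕ → List (List α) → List α
  | _, [] => []
  | _, [w] => w
  | k, w :: ws => w ++ d k ++ glue d (k + 1) ws

/-!
In a factor-free `K`-partition of `w′`, every separator `α γᵢ^{3K−2} α` is cut into exactly the
blocks `α γᵢ^{K−1}`, `γᵢ^K`, `γᵢ^{K−1} α`. Indeed, the block containing the first `α` takes at
most `K − 1` copies of `γᵢ`; the next block consists of `γᵢ`'s only, and the one after it cannot,
since two powers of `γᵢ` are factors of one another; so that third block reaches the second `α`,
and the `3K − 2` letters `γᵢ` fit into these three blocks only if all have full length `K`.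
Removing the separator blocks leaves a factor-free partition of `{w₁, …, wₙ}`. Conversely, these
blocks can be inserted into any factor-free partition of `{w₁, …, wₙ}`: they are distinct of equal
length, each contains `γᵢ`, which occurs in no block outside its separator, and none contains a
letter of `Σ`.
-/

namespace List

variable {A : Type*}

theorem flatten_eq_append_cons {P : List (List A)} {u t : List A} {x : A}
    (h : P.flatten = u ++ x :: t) :
    ∃ P₁ q₁ q₂ P₂, P = P₁ ++ (q₁ ++ x :: q₂) :: P₂ ∧ P₁.flatten ++ q₁ = u ∧
      q₂ ++ P₂.flatten = t := by
  rcases flatten_eq_append_iff.mp h with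
    ⟨P₁, P₂, rfl, rfl, hP₂⟩ | ⟨P₁, q₁, y, q₂, P₂, rfl, rfl, hy⟩
  · obtain ⟨E, q₂, P₂, rfl, hE, rfl⟩ := flatten_eq_cons_iff.mp hP₂.symm
    refine ⟨P₁ ++ E, [], q₂, P₂, by simp, ?_, rfl⟩
    simp [flatten_eq_nil_iff.mpr hE]
  · obtain ⟨rfl, rfl⟩ := cons_eq_cons.mp hy
    exact ⟨P₁, q₁, q₂, P₂, rfl, rfl, by simp⟩

theorem append_eq_replicate_append {y w w' : List A} {n : ℕ} {c : A}
    (h : y ++ w = replicate n c ++ w') (hy : y.length ≤ n) :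
    y = replicate y.length c ∧ w = replicate (n - y.length) c ++ w' := by
  refine append_inj (h.trans ?_) (by simp)
  rw [← append_assoc, ← replicate_add, Nat.add_sub_cancel' hy]

end List

section

variable {A : Type*}

theorem flatten_glue (d : ℕ → List (List A)) (k : ℕ) (Ps : List (List (List A))) :
    (glue d k Ps).flatten = glue (fun j => (d j).flatten) k (Ps.map List.flatten) := by
  fun_induction glue d k Ps <;> simp_all [glue]

theorem glue_perm (d : ℕ → List A) (k : ℕ) (ws : List (List A)) :
    (glue d k ws).Perm (ws.flatten ++ ((List.range' k (ws.length - 1)).map d).flatten) := by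
  fun_induction glue d k ws with
  | case1 => simp
  | case2 => simp
  | case3 k w ws hws ih =>
    obtain ⟨n, hn⟩ := Nat.exists_eq_succ_of_ne_zero (mt List.length_eq_zero_iff.mp hws)
    simp only [List.length_cons, hn, List.range'_succ, List.map_cons,
      List.flatten_cons, List.append_assoc, Nat.succ_sub_one] at ih ⊢
    exact ((ih.append_left _).append_left w).trans
      ((List.perm_append_comm_assoc _ _ _).append_left w)

def InfixIncomparable (p q : List A) : Prop := ¬ p <:+: q ∧ ¬ q <:+: p

theorem InfixIncomparable.symm {p q : List A} (h : InfixIncomparable p q) :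
    InfixIncomparable q p :=
  And.symm h

theorem infixIncomparable_of_mem_of_not_mem {p q : List A} {x y : A} (hxp : x ∈ p)
    (hxq : x ∉ q) (hyq : y ∈ q) (hyp : y ∉ p) : InfixIncomparable p q :=
  ⟨fun h => hxq (h.subset hxp), fun h => hyp (h.subset hyq)⟩

theorem FactorFree.perm {P Q : List (List A)} (h : P.Perm Q) : FactorFree P ↔ FactorFree Q :=
  h.pairwise_iff InfixIncomparable.symm

theorem FactorFree.sublist {P Q : List (List A)} (h : P.Sublist Q) (hQ : FactorFree Q) :
    FactorFree P :=
  List.Pairwise.sublist h hQ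

theorem factorFree_of_nodup {K : ℕ} {P : List (List A)} (hP : P.Nodup)
    (hK : ∀ p ∈ P, p.length = K) : FactorFree P :=
  hP.imp_of_mem fun hp hq hpq =>
    ⟨fun h => hpq (h.eq_of_length ((hK _ hp).trans (hK _ hq).symm)),
     fun h => hpq (h.eq_of_length ((hK _ hq).trans (hK _ hp).symm)).symm⟩

def separatorBlocks (K : ℕ) (a c : A) : List (List A) :=
  [a :: List.replicate (K - 1) c, List.replicate K c, List.replicate (K - 1) c ++ [a]]

section separatorBlocks

variable {K : ℕ} {a c : A}

theorem flatten_separatorBlocks :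
    (separatorBlocks K a c).flatten = [a] ++ List.replicate (3 * K - 2) c ++ [a] := by
  rcases Nat.eq_zero_or_pos K with rfl | hK
  · simp [separatorBlocks]
  obtain ⟨j, rfl⟩ : ∃ j, K = j + 1 := ⟨K - 1, by omega⟩
  simp [separatorBlocks, show 3 * (j + 1) - 2 = j + (j + 1 + j) by omega, List.replicate_add]

theorem length_of_mem_separatorBlocks (hK : 1 ≤ K) {p : List A}
    (hp : p ∈ separatorBlocks K a c) : p.length = K := by
  simp only [separatorBlocks, List.mem_cons, List.not_mem_nil, or_false] at hp
  rcases hp with rfl | rfl | rfl <;> simp <;> omega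

theorem mem_of_mem_separatorBlocks (hK : 2 ≤ K) {p : List A}
    (hp : p ∈ separatorBlocks K a c) : c ∈ p := by
  simp only [separatorBlocks, List.mem_cons, List.not_mem_nil, or_false] at hp
  rcases hp with rfl | rfl | rfl <;> simp [List.mem_replicate] <;> omega

theorem eq_or_eq_of_mem_separatorBlocks {p : List A} (hp : p ∈ separatorBlocks K a c)
    {x : A} (hx : x ∈ p) : x = a ∨ x = c := by
  simp only [separatorBlocks, List.mem_cons, List.not_mem_nil, or_false] at hp
  rcases hp with rfl | rfl | rfl <;> simp [List.mem_replicate] at hx <;> tauto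

theorem factorFree_separatorBlocks (hK : 2 ≤ K) (hac : a ≠ c) :
    FactorFree (separatorBlocks K a c) := by
  refine factorFree_of_nodup ?_ fun p hp => length_of_mem_separatorBlocks (by omega) hp
  obtain ⟨j, rfl⟩ : ∃ j, K = j + 2 := ⟨K - 2, by omega⟩
  simp [separatorBlocks, List.replicate_succ, hac]
  intro h
  simpa [List.mem_replicate, hac] using congrArg (a ∈ ·) h

end separatorBlocks

theorem exists_eq_replicate_cons_cons {K r : ℕ} {a c : A} {v : List A} {P : List (List A)}
    (hP : IsPartition K (List.replicate r c ++ a :: v) P) (hff : FactorFree P) (hr : K ≤ r) :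
    ∃ t z P', P = List.replicate t c :: (List.replicate (r - t) c ++ a :: z) :: P' ∧
      z ++ P'.flatten = v := by
  obtain ⟨hflat, hblocks⟩ := hP
  obtain _ | ⟨q, _ | ⟨q', P'⟩⟩ := P
  · simp at hflat
  · obtain ⟨-, h⟩ := List.append_eq_replicate_append (w := []) (by simpa using hflat)
      ((hblocks q (by simp)).2.trans hr)
    simp at h
  rw [List.flatten_cons] at hflat
  obtain ⟨hq, hflat'⟩ := List.append_eq_replicate_append hflat ((hblocks q (by simp)).2.trans hr)
  rw [List.flatten_cons] at hflat'
  have hq' : ∀ n, q' ≠ List.replicate n c := by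
    intro n hn
    have h : InfixIncomparable q q' := (List.pairwise_cons.mp hff).1 q' (by simp)
    rw [hq, hn] at h
    rcases le_total q.length n with hle | hle
    · exact h.1 (List.infix_replicate_iff.mpr (by simpa using hle))
    · exact h.2 (List.infix_replicate_iff.mpr (by simpa using hle))
  rcases List.append_eq_append_iff.mp hflat' with ⟨e, he, -⟩ | ⟨_ | ⟨x, z⟩, rfl, he⟩
  · refine absurd (List.eq_replicate_of_mem fun b hb => ?_) (hq' _)
    exact List.eq_of_mem_replicate (he ▸ List.mem_append_left e hb)
  · exact absurd (by simp) (hq' (r - q.length))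
  · obtain ⟨rfl, rfl⟩ := List.cons_eq_cons.mp he
    exact ⟨q.length, z, P', congrArg (· :: _) hq, rfl⟩

theorem exists_eq_append_separatorBlocks {K : ℕ} {a c : A} {u v : List A} {P : List (List A)}
    (hP : IsPartition K (u ++ ([a] ++ List.replicate (3 * K - 2) c ++ [a]) ++ v) P)
    (hff : FactorFree P) :
    ∃ P₁ P₂, P = P₁ ++ separatorBlocks K a c ++ P₂ ∧ IsPartition K u P₁ ∧ IsPartition K v P₂ := by
  obtain ⟨hflat, hblocks⟩ := hP
  obtain ⟨P₁, x, y, P₂, rfl, hu, hrest⟩ :=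
    List.flatten_eq_append_cons (t := List.replicate (3 * K - 2) c ++ a :: v) (by simpa using hflat)
  have hxy := (hblocks (x ++ a :: y) (by simp)).2
  simp only [List.length_append, List.length_cons] at hxy
  obtain ⟨hy, hP₂⟩ := List.append_eq_replicate_append hrest (by omega)
  have hsub : P₂.Sublist (P₁ ++ (x ++ a :: y) :: P₂) :=
    (List.sublist_cons_self _ _).trans (List.sublist_append_right _ _)
  obtain ⟨t, z, P', rfl, hv⟩ := exists_eq_replicate_cons_cons
    ⟨hP₂, fun p hp => hblocks p (hsub.subset hp)⟩ (hff.sublist hsub) (by omega)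
  have ht := (hblocks (List.replicate t c) (by simp)).2
  have hz := (hblocks (List.replicate (3 * K - 2 - y.length - t) c ++ a :: z) (by simp)).2
  simp only [List.length_replicate, List.length_append, List.length_cons] at ht hz
  obtain rfl : x = [] := List.eq_nil_of_length_eq_zero (by omega)
  obtain rfl : z = [] := List.eq_nil_of_length_eq_zero (by omega)
  refine ⟨P₁, P', ?_, ⟨by simpa using hu, fun p hp => hblocks p (by simp [hp])⟩,
    ⟨by simpa using hv, fun p hp => hblocks p (by simp [hp])⟩⟩
  rw [show y.length = K - 1 by omega] at hy
  rw [hy, show t = K by omega]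
  simp [separatorBlocks, show 3 * K - 2 - (K - 1) - K = K - 1 by omega]

theorem exists_isMultiPartition_of_glue {K : ℕ} {a : A} {g : ℕ → A} :
    ∀ {k : ℕ} {ws : List (List A)} {P : List (List A)},
      IsPartition K (glue (fun j => [a] ++ List.replicate (3 * K - 2) (g j) ++ [a]) k ws) P →
      FactorFree P → ∃ Ps, IsMultiPartition K ws Ps ∧ Ps.flatten.Sublist P
  | _, [], _, _, _ => ⟨[], .nil, by simp⟩
  | _, [_], P, hP, _ => ⟨[P], .cons hP .nil, by simp⟩
  | _, _ :: _ :: _, _, hP, hff => by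
    obtain ⟨P₁, P₂, rfl, hP₁, hP₂⟩ := exists_eq_append_separatorBlocks hP hff
    obtain ⟨Ps, hPs, hsub⟩ := exists_isMultiPartition_of_glue hP₂
      (hff.sublist (List.sublist_append_right _ _))
    refine ⟨P₁ :: Ps, .cons hP₁ hPs, ?_⟩
    rw [List.flatten_cons, List.append_assoc]
    exact (hsub.trans (List.sublist_append_right _ _)).append_left P₁

section IsMultiPartition

variable {K : ℕ} {ws : List (List A)} {Ps : List (List (List A))}

theorem IsMultiPartition.map_flatten (hPs : IsMultiPartition K ws Ps) :
    Ps.map List.flatten = ws := by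
  induction hPs with
  | nil => rfl
  | cons h _ ih => simp [h.1, ih]

theorem IsMultiPartition.mem_flatten (hPs : IsMultiPartition K ws Ps) {p : List A}
    (hp : p ∈ Ps.flatten) : p ≠ [] ∧ p.length ≤ K := by
  induction hPs with
  | nil => simp at hp
  | cons h _ ih =>
    rcases List.mem_append.mp hp with hp | hp
    exacts [h.2 p hp, ih hp]

theorem IsMultiPartition.exists_mem_of_mem (hPs : IsMultiPartition K ws Ps) {p : List A}
    (hp : p ∈ Ps.flatten) {x : A} (hx : x ∈ p) : ∃ w ∈ ws, x ∈ w := by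
  rw [← List.mem_flatten, ← hPs.map_flatten, ← List.flatten_flatten]
  exact List.mem_flatten.mpr ⟨p, hp, hx⟩

end IsMultiPartition

theorem isPartition_glue_separatorBlocks {K : ℕ} (hK : 1 ≤ K) {a : A} {g : ℕ → A} {k : ℕ}
    {ws : List (List A)} {Ps : List (List (List A))} (hPs : IsMultiPartition K ws Ps) :
    IsPartition K (glue (fun j => [a] ++ List.replicate (3 * K - 2) (g j) ++ [a]) k ws)
      (glue (fun j => separatorBlocks K a (g j)) k Ps) := by
  refine ⟨?_, fun p hp => ?_⟩
  · simp only [flatten_glue, flatten_separatorBlocks, hPs.map_flatten]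
  rw [(glue_perm _ _ _).mem_iff, List.mem_append] at hp
  rcases hp with hp | hp
  · exact hPs.mem_flatten hp
  · obtain ⟨_, hl, hp⟩ := List.mem_flatten.mp hp
    obtain ⟨j, -, rfl⟩ := List.mem_map.mp hl
    have := length_of_mem_separatorBlocks hK hp
    exact ⟨List.ne_nil_of_length_pos (by omega), this.le⟩

theorem factorFree_glue_separatorBlocks {K : ℕ} (hK : 2 ≤ K) {S : Set A} {a : A} (ha : a ∉ S)
    {g : ℕ → A} {k : ℕ} {ws : List (List A)} {Ps : List (List (List A))}
    (hPs : IsMultiPartition K ws Ps) (hS : ∀ w ∈ ws, ∀ x ∈ w, x ∈ S)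
    (hg : ∀ j ∈ List.range' k (ws.length - 1), g j ∉ S ∧ g j ≠ a)
    (hginj : ∀ i ∈ List.range' k (ws.length - 1), ∀ j ∈ List.range' k (ws.length - 1),
      g i = g j → i = j)
    (hff : FactorFree Ps.flatten) :
    FactorFree (glue (fun j => separatorBlocks K a (g j)) k Ps) := by
  rw [FactorFree.perm (glue_perm _ _ _)]
  rw [hPs.length_eq] at hg hginj
  set L := List.range' k (Ps.length - 1)
  have hword : ∀ p ∈ Ps.flatten, ∀ j ∈ L, ∀ q ∈ separatorBlocks K a (g j),
      InfixIncomparable q p := by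
    intro p hp j hj q hq
    have hpS : ∀ x ∈ p, x ∈ S := fun x hx =>
      let ⟨w, hw, hxw⟩ := hPs.exists_mem_of_mem hp hx
      hS w hw x hxw
    obtain ⟨x, hx⟩ := List.exists_mem_of_ne_nil _ (hPs.mem_flatten hp).1
    refine infixIncomparable_of_mem_of_not_mem (mem_of_mem_separatorBlocks hK hq)
      (fun h => (hg j hj).1 (hpS _ h)) hx fun h => ?_
    rcases eq_or_eq_of_mem_separatorBlocks hq h with rfl | rfl
    exacts [ha (hpS _ hx), (hg j hj).1 (hpS _ hx)]
  have hsep : ∀ i ∈ L, ∀ j ∈ L, i ≠ j → ∀ p ∈ separatorBlocks K a (g i),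
      ∀ q ∈ separatorBlocks K a (g j), InfixIncomparable p q := by
    have hnot : ∀ i ∈ L, ∀ j ∈ L, i ≠ j → ∀ q ∈ separatorBlocks K a (g j), g i ∉ q :=
      fun i hi j hj hij q hq h => by
        rcases eq_or_eq_of_mem_separatorBlocks hq h with h | h
        exacts [(hg i hi).2 h, hij (hginj i hi j hj h)]
    intro i hi j hj hij p hp q hq
    exact infixIncomparable_of_mem_of_not_mem (mem_of_mem_separatorBlocks hK hp)
      (hnot i hi j hj hij q hq) (mem_of_mem_separatorBlocks hK hq) (hnot j hj i hi hij.symm p hp)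
  refine List.pairwise_append.mpr ⟨hff, List.pairwise_flatten.mpr ⟨?_, ?_⟩, ?_⟩
  · simp only [List.mem_map]
    rintro _ ⟨j, hj, rfl⟩
    exact factorFree_separatorBlocks hK (hg j hj).2.symm
  · rw [List.pairwise_map]
    exact (List.nodup_range' ..).imp_of_mem fun hi hj hij => hsep _ hi _ hj hij
  · intro p hp q hq
    obtain ⟨_, hl, hq⟩ := List.mem_flatten.mp hq
    obtain ⟨j, hj, rfl⟩ := List.mem_map.mp hl
    exact (hword p hp j hj q hq).symm

end

theorem stmt_11_general {γ : Type*} (K : ℕ) (hK : 2 ≤ K) (S : Set γ) (a : γ) (g : ℕ → γ)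
    (ws : List (List γ))
    (hsub : ∀ w ∈ ws, ∀ x ∈ w, x ∈ S)
    (ha : a ∉ S)
    (hg : ∀ i, 1 ≤ i → i ≤ ws.length - 1 → g i ∉ S ∧ g i ≠ a)
    (hginj : ∀ i j, 1 ≤ i → i ≤ ws.length - 1 → 1 ≤ j → j ≤ ws.length - 1 →
      g i = g j → i = j) :
    (∃ P, IsPartition K
        (glue (fun k => [a] ++ List.replicate (3 * K - 2) (g k) ++ [a]) 1 ws) P ∧
      FactorFree P) ↔
    (∃ Ps, IsMultiPartition K ws Ps ∧ FactorFree Ps.flatten) := by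
  constructor
  · rintro ⟨P, hP, hff⟩
    obtain ⟨Ps, hPs, hPsP⟩ := exists_isMultiPartition_of_glue hP hff
    exact ⟨Ps, hPs, FactorFree.sublist hPsP hff⟩
  · rintro ⟨Ps, hPs, hff⟩
    have hrange : ∀ j ∈ List.range' 1 (ws.length - 1), 1 ≤ j ∧ j ≤ ws.length - 1 := by
      intro j hj
      rw [List.mem_range'_1] at hj
      omega
    refine ⟨_, isPartition_glue_separatorBlocks (by omega) hPs,
      factorFree_glue_separatorBlocks hK ha hPs hsub
        (fun j hj => hg j (hrange j hj).1 (hrange j hj).2)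
        (fun i hi j hj =>
          hginj i j (hrange i hi).1 (hrange i hi).2 (hrange j hj).1 (hrange j hj).2)
        hff⟩

/-- `w′ = w₁ α γ₁^{3K−2} α w₂ α γ₂^{3K−2} α ⋯ α γ_{n−1}^{3K−2} α w_n` has a
factor-free `K`-partition iff the multiset `{w₁, …, w_n}` has one.  Here `S` is
the set of letters of `Σ`, and `a = α`, `g 1, …, g (n-1)` are pairwise distinct
letters not in `S`. -/
theorem stmt_11 {γ : Type*} (K : ℕ) (hK : 2 ≤ K) (S : Set γ) (a : γ) (g : ℕ → γ)
    (ws : List (List γ)) (hws : ws ≠ []) (hne : ∀ w ∈ ws, w ≠ [])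
    (hsub : ∀ w ∈ ws, ∀ x ∈ w, x ∈ S)
    (ha : a ∉ S)
    (hg : ∀ i, 1 ≤ i → i ≤ ws.length - 1 → g i ∉ S ∧ g i ≠ a)
    (hginj : ∀ i j, 1 ≤ i → i ≤ ws.length - 1 → 1 ≤ j → j ≤ ws.length - 1 →
      g i = g j → i = j) :
    (∃ P, IsPartition K
        (glue (fun k => [a] ++ List.replicate (3 * K - 2) (g k) ++ [a]) 1 ws) P ∧
      FactorFree P) ↔
    (∃ Ps, IsMultiPartition K ws Ps ∧ FactorFree Ps.flatten) :=
  stmt_11_general K hK S a g ws hsub ha hg hginj
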